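/- arXiv:1508.06590 — 2 statements merged into one kernel-verified Lean document; each statement's English description precedes it below -/
import Mathlib

section
/- Let Φ be a nearest-neighbour interaction for a set of constraints ℰ on ℤ^d, with associated specification π and SFT Ω(ℰ). If Ω(ℰ) has a safe symbol, then c_π(ν) > 0 for every shift-invariant Borel probability measure ν with supp(ν) ⊆ Ω(ℰ). -/
/-!
Fix `ω ∈ Ω(ℰ)` and a finite `Λ`. Replacing a configuration `θ` on `Λ` by the one that takes
the value `ω(0)` at the origin, the safe symbol `a` at the neighbours of the origin in `Λ`, and
agrees with `θ` elsewhere keeps `θ` feasible (the origin is then surrounded by `a` or by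
`ω`), changes the energy by at most a constant `C` depending only on `Φ` and `d`, and is at
most `|𝒜|^{2d+1}`-to-one. Hence the partition function is at most `e^C |𝒜|^{2d+1}` times the
weight of `{θ(0) = ω(0)}`, uniformly in `Λ` and `ω`.
-/

open scoped Classical
open Filter MeasureTheory

namespace Paper

abbrev Site (d : ℕ) := Fin d → ℤ

/-- The `i`-th canonical basis vector in `ℤ^d`. -/
def ee (d : ℕ) (i : Fin d) : Site d := fun j => if j = i then 1 else 0

section General

variable {d : ℕ} {A : Type} [Fintype A] [DecidableEq A]

/-- A configuration `ω` is feasible on a set `Λ` for the constraints `E`. -/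
def FeasibleOn (E : Fin d → Set (A × A)) (Λ : Set (Site d)) (ω : Site d → A) : Prop :=
  ∀ x ∈ Λ, ∀ i : Fin d, x + ee d i ∈ Λ → (ω x, ω (x + ee d i)) ∉ E i

/-- The nearest-neighbour SFT `Ω(ℰ)`. -/
def Omega (E : Fin d → Set (A × A)) : Set (Site d → A) := {ω | FeasibleOn E Set.univ ω}

/-- The energy of a configuration on a finite set `Λ`. -/
noncomputable def energy (Φ₀ : A → ℝ) (Φ₁ : Fin d → A → A → ℝ)
    (Λ : Finset (Site d)) (ω : Site d → A) : ℝ :=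
  (∑ x ∈ Λ, Φ₀ (ω x)) +
    ∑ i : Fin d, ∑ x ∈ Λ.filter (fun x => x + ee d i ∈ Λ), Φ₁ i (ω x) (ω (x + ee d i))

/-- Feasibility of a configuration on a finite set, intrinsic version. -/
def FeasibleC (E : Fin d → Set (A × A)) (Λ : Finset (Site d))
    (θ : {x // x ∈ Λ} → A) : Prop :=
  ∀ (x : {x // x ∈ Λ}) (i : Fin d) (h : (x : Site d) + ee d i ∈ Λ),
    (θ x, θ ⟨(x : Site d) + ee d i, h⟩) ∉ E i

/-- Energy of a configuration on a finite set, intrinsic version. -/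
noncomputable def energyC (Φ₀ : A → ℝ) (Φ₁ : Fin d → A → A → ℝ)
    (Λ : Finset (Site d)) (θ : {x // x ∈ Λ} → A) : ℝ :=
  (∑ x : {x // x ∈ Λ}, Φ₀ (θ x)) +
    ∑ i : Fin d, ∑ x : {x // x ∈ Λ},
      if h : (x : Site d) + ee d i ∈ Λ then Φ₁ i (θ x) (θ ⟨(x : Site d) + ee d i, h⟩) else 0

/-- The partition function `Z^Φ_Λ`, summing over feasible (locally admissible) configurations. -/
noncomputable def Zpart (E : Fin d → Set (A × A)) (Φ₀ : A → ℝ) (Φ₁ : Fin d → A → A → ℝ)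
    (Λ : Finset (Site d)) : ℝ :=
  ∑ θ : {x // x ∈ Λ} → A,
    if FeasibleC E Λ θ then Real.exp (-energyC Φ₀ Φ₁ Λ θ) else 0

/-- The closure `Λ ∪ ∂Λ` of a finite set. -/
def closureF (Λ : Finset (Site d)) : Finset (Site d) :=
  Λ ∪ Finset.univ.biUnion fun i : Fin d => Λ.image (· + ee d i) ∪ Λ.image (· - ee d i)

/-- The (outer) boundary `∂Λ`. -/
def bdry (Λ : Finset (Site d)) : Finset (Site d) := closureF Λ \ Λ

/-- Combine a configuration `θ` on `Λ` with a configuration `ω` off `Λ`. -/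
def patch (Λ : Finset (Site d)) (θ : {x // x ∈ Λ} → A) (ω : Site d → A) : Site d → A :=
  fun x => if h : x ∈ Λ then θ ⟨x, h⟩ else ω x

/-- The Gibbsian weight of a configuration `θ` on `Λ` with boundary condition `ω(∂Λ)`. -/
noncomputable def bWeight (E : Fin d → Set (A × A)) (Φ₀ : A → ℝ) (Φ₁ : Fin d → A → A → ℝ)
    (Λ : Finset (Site d)) (ω : Site d → A) (θ : {x // x ∈ Λ} → A) : ℝ :=
  if FeasibleOn E (↑(closureF Λ)) (patch Λ θ ω) then
    Real.exp (-energy Φ₀ Φ₁ (closureF Λ) (patch Λ θ ω)) else 0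

/-- The probability assigned by the specification `π^{ω(∂Λ)}_Λ` to an event `Ev`. -/
noncomputable def piProb (E : Fin d → Set (A × A)) (Φ₀ : A → ℝ) (Φ₁ : Fin d → A → A → ℝ)
    (Λ : Finset (Site d)) (ω : Site d → A) (Ev : (Site d → A) → Prop) : ℝ :=
  (∑ θ : {x // x ∈ Λ} → A, if Ev (patch Λ θ ω) then bWeight E Φ₀ Φ₁ Λ ω θ else 0) /
    ∑ θ : {x // x ∈ Λ} → A, bWeight E Φ₀ Φ₁ Λ ω θ

/-- Lexicographic (strict) order on `ℤ^d`. -/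
def lexLt (x y : Site d) : Prop := ∃ i, (∀ j, j < i → x j = y j) ∧ x i < y i

/-- The block `B_n = [-n,n]^d ∩ ℤ^d`. -/
noncomputable def boxF (d n : ℕ) : Finset (Site d) := Finset.Icc (fun _ => -(n : ℤ)) fun _ => (n : ℤ)

/-- `S_n = B_n \ 𝒫`, where `𝒫` is the lexicographic past. -/
noncomputable def SF (d n : ℕ) : Finset (Site d) := (boxF d n).filter fun x => ¬lexLt x 0

/-- `S_{y,z} = {x ≽ 0 : -y ≤ x ≤ z}`. -/
noncomputable def SyzF {d : ℕ} (y z : Site d) : Finset (Site d) :=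
  (Finset.Icc (-y) z).filter fun x => ¬lexLt x 0

/-- `π_Λ(ω) = π^{ω(∂Λ)}_Λ(θ(0) = ω(0))`. -/
noncomputable def piAt (E : Fin d → Set (A × A)) (Φ₀ : A → ℝ) (Φ₁ : Fin d → A → A → ℝ)
    (Λ : Finset (Site d)) (ω : Site d → A) : ℝ :=
  piProb E Φ₀ Φ₁ Λ ω fun σ => σ 0 = ω 0

/-- `π_n(ω)`. -/
noncomputable def piN (E : Fin d → Set (A × A)) (Φ₀ : A → ℝ) (Φ₁ : Fin d → A → A → ℝ)
    (n : ℕ) (ω : Site d → A) : ℝ :=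
  piAt E Φ₀ Φ₁ (SF d n) ω

/-- `π_{y,z}(ω)`. -/
noncomputable def piYZ (E : Fin d → Set (A × A)) (Φ₀ : A → ℝ) (Φ₁ : Fin d → A → A → ℝ)
    (y z : Site d) (ω : Site d → A) : ℝ :=
  piAt E Φ₀ Φ₁ (SyzF y z) ω

/-- `A_Φ(ω) = -Φ(ω(0)) - Σ_i Φ(ω({0,e_i}))`. -/
noncomputable def AΦ (Φ₀ : A → ℝ) (Φ₁ : Fin d → A → A → ℝ) (ω : Site d → A) : ℝ :=
  -Φ₀ (ω 0) - ∑ i, Φ₁ i (ω 0) (ω (ee d i))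

/-- `θ`, given on the set `Λ`, extends to a point of `Ω(ℰ)` (global admissibility). -/
def extendsOmega (E : Fin d → Set (A × A)) (Λ : Set (Site d)) (θ : Site d → A) : Prop :=
  ∃ ω ∈ Omega E, ∀ x ∈ Λ, ω x = θ x

/-- The square block D-condition. -/
def SquareBlockD (E : Fin d → Set (A × A)) : Prop :=
  ∃ r : ℕ → ℕ, Tendsto (fun n => (r n : ℝ) / (n : ℝ)) atTop (nhds 0) ∧
    ∀ (n : ℕ) (Λ : Finset (Site d)), (∀ x ∈ Λ, x ∉ boxF d (n + r n)) →
      ∀ θ τ : Site d → A, extendsOmega E ↑(boxF d n) θ → extendsOmega E ↑Λ τ →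
        ∃ ω ∈ Omega E, (∀ x ∈ boxF d n, ω x = θ x) ∧ ∀ x ∈ Λ, ω x = τ x

/-- `c_π(ν) = inf {π_Λ(ω) : 0 ∈ Λ finite, ω ∈ supp(ν)}` (with `S = supp(ν)`). -/
noncomputable def cpi (E : Fin d → Set (A × A)) (Φ₀ : A → ℝ) (Φ₁ : Fin d → A → A → ℝ)
    (S : Set (Site d → A)) : ℝ :=
  sInf {r | ∃ Λ : Finset (Site d), (0 : Site d) ∈ Λ ∧ ∃ ω ∈ S, r = piAt E Φ₀ Φ₁ Λ ω}

/-- The shift action. -/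
def shift (t : Site d) (ω : Site d → A) : Site d → A := fun x => ω (x + t)

/-- The cylinder set of configurations agreeing with `θ` on `Λ`. -/
def cylinder (Λ : Finset (Site d)) (θ : Site d → A) : Set (Site d → A) :=
  {σ | ∀ x ∈ Λ, σ x = θ x}

/-- The support of a measure, following the paper's definition. -/
def measSupport [MeasurableSpace A] (ν : Measure (Site d → A)) : Set (Site d → A) :=
  {ω | ∀ Λ : Finset (Site d), 0 < ν (cylinder Λ ω)}

/-- Shift-invariance (stationarity) of a measure. -/
def ShiftInvariant [MeasurableSpace A] (ν : Measure (Site d → A)) : Prop :=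
  ∀ t : Site d, Measure.map (shift t) ν = ν

/-- `ℓ¹` distance on `ℤ^d`. -/
noncomputable def dist1 (x y : Site d) : ℝ := ∑ i, ((x i - y i).natAbs : ℝ)

/-- `ℓ¹` distance between two finite sets. -/
noncomputable def setDist (Θ Sg : Finset (Site d)) : ℝ :=
  sInf {r | ∃ x ∈ Θ, ∃ y ∈ Sg, r = dist1 x y}

/-- Nearest-neighbour adjacency on `ℤ^d`. -/
def adj (x y : Site d) : Prop := (∑ i, (x i - y i).natAbs) = 1

/-- `⋆`-adjacency on `ℤ^d` (`0 < ‖x-y‖_∞ ≤ 1`). -/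
def starAdj (x y : Site d) : Prop := x ≠ y ∧ ∀ i, (x i - y i).natAbs ≤ 1

/-- Connectedness of a subset of `ℤ^d` with respect to adjacency. -/
def ConnectedSet (S : Set (Site d)) : Prop :=
  ∀ x ∈ S, ∀ y ∈ S, Relation.ReflTransGen (fun u v => u ∈ S ∧ v ∈ S ∧ adj u v) x y

/-- Connectedness with respect to `⋆`-adjacency. -/
def StarConnectedSet (S : Set (Site d)) : Prop :=
  ∀ x ∈ S, ∀ y ∈ S, Relation.ReflTransGen (fun u v => u ∈ S ∧ v ∈ S ∧ starAdj u v) x y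

/-- `⋆`-closure of a finite set. -/
noncomputable def starClosureF (Θ : Finset (Site d)) : Finset (Site d) :=
  Θ ∪ Θ.biUnion fun x => ((Finset.Icc (fun _ => (-1 : ℤ)) fun _ => (1 : ℤ)).erase 0).image (x + ·)

/-- `⋆`-boundary of a finite set. -/
noncomputable def starBdryF (Θ : Finset (Site d)) : Finset (Site d) := starClosureF Θ \ Θ

/-- Inner boundary of a finite set. -/
noncomputable def innerBdry (Λ : Finset (Site d)) : Finset (Site d) :=
  Λ.filter fun x => ∃ y, adj x y ∧ y ∉ Λ

end General

section Percolation

/-- The open cluster of `x` in a site configuration `σ` on `ℤ^d`. -/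
def openCluster {d : ℕ} (σ : Site d → Bool) (x : Site d) : Set (Site d) :=
  {y | Relation.ReflTransGen (fun u v => adj u v ∧ σ u = true ∧ σ v = true) x y}

/-- There is an infinite connected component of `1`'s. -/
def HasInfiniteCluster {d : ℕ} (σ : Site d → Bool) : Prop :=
  ∃ x, σ x = true ∧ (openCluster σ x).Infinite

/-- `μ` is the i.i.d. Bernoulli(`p`) site percolation measure on `{0,1}^{ℤ^d}`. -/
def IsBernoulliProduct {d : ℕ} (p : ℝ) (μ : Measure (Site d → Bool)) : Prop :=
  IsProbabilityMeasure μ ∧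
    ∀ (Λ : Finset (Site d)) (η : Site d → Bool),
      (μ (cylinder Λ η)).toReal = ∏ x ∈ Λ, if η x then p else 1 - p

/-- The critical probability of Bernoulli site percolation on `ℤ²`. -/
noncomputable def pc : ℝ :=
  sSup {p : ℝ | 0 ≤ p ∧ p ≤ 1 ∧
    ∀ μ : Measure (Site 2 → Bool), IsBernoulliProduct p μ →
      μ {σ | HasInfiniteCluster σ} = 0}

end Percolation

section SiteRC

variable {d : ℕ}

/-- The cluster of `x` among the `1`'s of `η` inside `Λ`. -/
def clusterIn (Λ : Finset (Site d)) (η : Site d → Bool) (x : Site d) : Set (Site d) :=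
  {y | Relation.ReflTransGen
    (fun u v => u ∈ Λ ∧ v ∈ Λ ∧ η u = true ∧ η v = true ∧ adj u v) x y}

/-- `κ_Λ(η)`: number of connected components of `1`'s of `η` in `Λ` not meeting the
inner boundary of `Λ`. -/
noncomputable def kappa (Λ : Finset (Site d)) (η : Site d → Bool) : ℕ :=
  Set.ncard {C : Set (Site d) | ∃ x ∈ Λ, η x = true ∧ C = clusterIn Λ η x ∧
    ∀ z ∈ C, z ∉ innerBdry Λ}

/-- The (unnormalized) wired site random-cluster weight. -/
noncomputable def psiWeight (p q : ℝ) (Λ : Finset (Site d)) (η : Site d → Bool) : ℝ :=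
  (p / (1 - p)) ^ (Λ.filter fun x => η x = true).card * q ^ kappa Λ η

/-- Extend a `{0,1}`-configuration on `Λ` by `0` outside. -/
def patchB (Λ : Finset (Site d)) (η : {x // x ∈ Λ} → Bool) : Site d → Bool :=
  fun x => if h : x ∈ Λ then η ⟨x, h⟩ else false

/-- Conditional probability of an event under the wired site random-cluster measure
`ψ^{(1)}_{p,q,Λ}`, given the values `τ` on `Δ`. -/
noncomputable def psiCond (p q : ℝ) (Λ : Finset (Site d))
    (Ev : (Site d → Bool) → Prop) (Δ : Finset (Site d)) (τ : Site d → Bool) : ℝ :=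
  (∑ η : {x // x ∈ Λ} → Bool,
      if Ev (patchB Λ η) ∧ ∀ x ∈ Δ, patchB Λ η x = τ x
      then psiWeight p q Λ (patchB Λ η) else 0) /
    ∑ η : {x // x ∈ Λ} → Bool,
      if ∀ x ∈ Δ, patchB Λ η x = τ x then psiWeight p q Λ (patchB Λ η) else 0

end SiteRC


section Models

/-- Potts constraints: none. -/
def pottsE (q : ℕ) : Fin 2 → Set (Fin q × Fin q) := fun _ => ∅

/-- Potts single-site interaction: zero. -/
def pottsPhi0 (q : ℕ) : Fin q → ℝ := fun _ => 0

/-- Potts bond interaction: `-β` on agreeing endpoints, `0` otherwise. -/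
noncomputable def pottsPhi1 (q : ℕ) (β : ℝ) : Fin 2 → Fin q → Fin q → ℝ :=
  fun _ a b => if a = b then -β else 0

/-- The distinguished Potts colour `q`. -/
def qcol (q : ℕ) (hq : 0 < q) : Fin q := ⟨q - 1, by omega⟩

/-- The monochromatic Potts point `ω_q`. -/
def omegaPotts (q : ℕ) (hq : 0 < q) : Site 2 → Fin q := fun _ => qcol q hq

/-- Widom-Rowlinson constraints: adjacent distinct nonzero symbols are forbidden. -/
def wrE (q : ℕ) : Fin 2 → Set (Fin (q + 1) × Fin (q + 1)) :=
  fun _ => {ab | ab.1 ≠ 0 ∧ ab.2 ≠ 0 ∧ ab.1 ≠ ab.2}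

/-- Widom-Rowlinson single-site interaction: `-log λ` on particles. -/
noncomputable def wrPhi0 (q : ℕ) (lam : ℝ) : Fin (q + 1) → ℝ :=
  fun a => if a = 0 then 0 else -Real.log lam

/-- Widom-Rowlinson bond interaction: zero. -/
def wrPhi1 (q : ℕ) : Fin 2 → Fin (q + 1) → Fin (q + 1) → ℝ := fun _ _ _ => 0

/-- The monochromatic Widom-Rowlinson point `ω_q`. -/
def omegaWR (q : ℕ) : Site 2 → Fin (q + 1) := fun _ => Fin.last q

/-- Hard-core constraints: adjacent `1`'s are forbidden. -/
def hcE : Fin 2 → Set (Bool × Bool) := fun _ => {(true, true)}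

/-- Hard-core single-site interaction: `-log γ` on particles. -/
noncomputable def hcPhi0 (γ : ℝ) : Bool → ℝ := fun b => if b then -Real.log γ else 0

/-- Hard-core bond interaction: zero. -/
def hcPhi1 : Fin 2 → Bool → Bool → ℝ := fun _ _ _ => 0

/-- The odd checkerboard point `ω^{(o)}`. -/
def omegaOdd : Site 2 → Bool := fun x => decide (Odd (x 0 + x 1))

end Models

/-- `a` is a safe symbol for the constraints `E`. -/
def SafeSymbol {d : ℕ} {A : Type} (E : Fin d → Set (A × A)) (a : A) : Prop :=
  ∀ (i : Fin d) (b : A), (a, b) ∉ E i ∧ (b, a) ∉ E i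

lemma sum_le_sum_add_mul_card {β : Type*} (s t : Finset β) {f g : β → ℝ} {c : ℝ} (hc : 0 ≤ c)
    (hle : ∀ x ∈ t, f x ≤ g x + c) (heq : ∀ x ∉ t, f x = g x) :
    ∑ x ∈ s, f x ≤ ∑ x ∈ s, g x + c * t.card := by
  calc ∑ x ∈ s, f x ≤ ∑ x ∈ s, (g x + if x ∈ t then c else 0) := by
        refine Finset.sum_le_sum fun x _ => ?_
        split_ifs with hx
        · exact hle x hx
        · simp [heq x hx]
    _ = ∑ x ∈ s, g x + c * (s ∩ t).card := by
        rw [Finset.sum_add_distrib, Finset.sum_ite_mem, Finset.sum_const, nsmul_eq_mul, mul_comm]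
    _ ≤ ∑ x ∈ s, g x + c * t.card := by
        gcongr
        exact Finset.inter_subset_right

lemma sum_comp_le_mul_sum {α β : Type*} [Fintype α] [Fintype β] [DecidableEq β] {g : α → β}
    {f : β → ℝ} (hf : ∀ b, 0 ≤ f b) {K : ℕ}
    (hK : ∀ b, (Finset.univ.filter fun x => g x = b).card ≤ K) :
    ∑ x, f (g x) ≤ K * ∑ b, f b := by
  rw [← Finset.sum_fiberwise Finset.univ g (fun x => f (g x)), Finset.mul_sum]
  refine Finset.sum_le_sum fun b _ => ?_
  calc ∑ x ∈ Finset.univ.filter (fun x => g x = b), f (g x)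
      = (Finset.univ.filter fun x => g x = b).card * f b := by
        rw [Finset.sum_congr rfl fun x hx => by rw [(Finset.mem_filter.mp hx).2],
          Finset.sum_const, nsmul_eq_mul]
    _ ≤ K * f b := by gcongr; exacts [hf b, hK b]

section SafeSymbol

variable {d : ℕ} {A : Type}

lemma ee_ne_zero (i : Fin d) : ee d i ≠ 0 := fun h => by simpa [ee] using congrFun h i

def originNbhd (d : ℕ) : Finset (Site d) :=
  insert 0 (Finset.univ.biUnion fun i : Fin d => {ee d i, -ee d i})

lemma ee_mem_originNbhd (i : Fin d) : ee d i ∈ originNbhd d :=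
  Finset.mem_insert_of_mem (Finset.mem_biUnion.mpr ⟨i, Finset.mem_univ _, by simp⟩)

lemma neg_ee_mem_originNbhd (i : Fin d) : -ee d i ∈ originNbhd d :=
  Finset.mem_insert_of_mem (Finset.mem_biUnion.mpr ⟨i, Finset.mem_univ _, by simp⟩)

section Patch

variable {Λ : Finset (Site d)} {θ : {x // x ∈ Λ} → A} {ω : Site d → A} {z : Site d}

lemma patch_of_mem (hz : z ∈ Λ) : patch Λ θ ω z = θ ⟨z, hz⟩ := dif_pos hz

lemma patch_of_notMem (hz : z ∉ Λ) : patch Λ θ ω z = ω z := dif_neg hz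

end Patch

def insulate (Λ : Finset (Site d)) (ω : Site d → A) (a : A) (θ : {x // x ∈ Λ} → A) :
    {x // x ∈ Λ} → A :=
  fun x => if (x : Site d) = 0 then ω 0 else if (x : Site d) ∈ originNbhd d then a else θ x

section Insulate

variable {Λ : Finset (Site d)} {ω : Site d → A} {a : A} {θ : {x // x ∈ Λ} → A} {z : Site d}

lemma patch_insulate_zero : patch Λ (insulate Λ ω a θ) ω 0 = ω 0 := by
  by_cases h : (0 : Site d) ∈ Λ <;> simp [patch, insulate, h]

lemma patch_insulate_of_mem_inter (hz : z ∈ Λ ∩ originNbhd d) (hz0 : z ≠ 0) :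
    patch Λ (insulate Λ ω a θ) ω z = a := by
  obtain ⟨hzΛ, hzN⟩ := Finset.mem_inter.mp hz
  simp [patch, insulate, hzΛ, hz0, hzN]

lemma patch_insulate_of_notMem_inter (hz : z ∉ Λ ∩ originNbhd d) :
    patch Λ (insulate Λ ω a θ) ω z = patch Λ θ ω z := by
  by_cases hzΛ : z ∈ Λ
  · have hzN : z ∉ originNbhd d := fun h => hz (Finset.mem_inter.mpr ⟨hzΛ, h⟩)
    have hz0 : z ≠ 0 := by rintro rfl; exact hzN (Finset.mem_insert_self _ _)
    simp [patch, insulate, hzΛ, hz0, hzN]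
  · rw [patch_of_notMem hzΛ, patch_of_notMem hzΛ]

end Insulate

theorem SafeSymbol.feasibleOn_patch_insulate {E : Fin d → Set (A × A)} {a : A}
    (hsafe : SafeSymbol E a) {ω : Site d → A} (hω : ω ∈ Omega E) {Λ : Finset (Site d)}
    {θ : {x // x ∈ Λ} → A} {S : Set (Site d)} (h : FeasibleOn E S (patch Λ θ ω)) :
    FeasibleOn E S (patch Λ (insulate Λ ω a θ) ω) := by
  intro x hx i hxi
  have hωi : ∀ z, (ω z, ω (z + ee d i)) ∉ E i := fun z => hω z trivial i trivial
  by_cases hx0 : x = 0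
  · subst hx0
    rw [zero_add] at hxi ⊢
    by_cases hy : ee d i ∈ Λ
    · rw [patch_insulate_of_mem_inter (Finset.mem_inter.mpr ⟨hy, ee_mem_originNbhd i⟩)
        (ee_ne_zero i)]
      exact (hsafe i _).2
    · rw [patch_insulate_zero, patch_of_notMem hy]
      simpa using hωi 0
  by_cases hy0 : x + ee d i = 0
  · by_cases hxΛ : x ∈ Λ
    · have hxN : x ∈ originNbhd d := by
        rw [eq_neg_of_add_eq_zero_left hy0]; exact neg_ee_mem_originNbhd i
      rw [patch_insulate_of_mem_inter (Finset.mem_inter.mpr ⟨hxΛ, hxN⟩) hx0]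
      exact (hsafe i _).1
    · rw [patch_of_notMem hxΛ, hy0, patch_insulate_zero, ← hy0]
      exact hωi x
  by_cases hxN : x ∈ Λ ∩ originNbhd d
  · rw [patch_insulate_of_mem_inter hxN hx0]
    exact (hsafe i _).1
  by_cases hyN : x + ee d i ∈ Λ ∩ originNbhd d
  · rw [patch_insulate_of_mem_inter hyN hy0]
    exact (hsafe i _).2
  rw [patch_insulate_of_notMem_inter hxN, patch_insulate_of_notMem_inter hyN]
  exact h x hx i hxi

theorem energy_le_energy_add_of_eqOn_compl (Φ₀ : A → ℝ) (Φ₁ : Fin d → A → A → ℝ) {M : ℝ}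
    (hΦ₀ : ∀ b, |Φ₀ b| ≤ M) (hΦ₁ : ∀ i b c, |Φ₁ i b c| ≤ M) (Λ t : Finset (Site d))
    {σ σ' : Site d → A} (h : Set.EqOn σ' σ (↑t)ᶜ) :
    energy Φ₀ Φ₁ Λ σ' ≤ energy Φ₀ Φ₁ Λ σ + 2 * M * ((2 * d + 1) * t.card) := by
  have hM : 0 ≤ 2 * M := by linarith [abs_nonneg (Φ₀ (σ 0)), hΦ₀ (σ 0)]
  have hsite : ∑ x ∈ Λ, Φ₀ (σ' x) ≤ ∑ x ∈ Λ, Φ₀ (σ x) + 2 * M * t.card := by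
    refine sum_le_sum_add_mul_card Λ t hM (fun x _ => ?_) fun x hx => by rw [h hx]
    linarith [le_abs_self (Φ₀ (σ' x)), neg_abs_le (Φ₀ (σ x)), hΦ₀ (σ' x), hΦ₀ (σ x)]
  -- a bond `{x, x + e_i}` sees the change only if `x ∈ t` or `x + e_i ∈ t`
  have hbond : ∀ i : Fin d,
      ∑ x ∈ Λ.filter (fun x => x + ee d i ∈ Λ), Φ₁ i (σ' x) (σ' (x + ee d i)) ≤
        ∑ x ∈ Λ.filter (fun x => x + ee d i ∈ Λ), Φ₁ i (σ x) (σ (x + ee d i)) +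
          2 * M * (2 * t.card) := by
    intro i
    set tᵢ := t ∪ t.image (· - ee d i)
    have hcard : (tᵢ.card : ℝ) ≤ 2 * t.card := by
      have : tᵢ.card ≤ 2 * t.card := calc
        tᵢ.card ≤ t.card + (t.image (· - ee d i) : Finset (Site d)).card :=
          Finset.card_union_le _ _
        _ ≤ 2 * t.card := by rw [two_mul]; exact Nat.add_le_add_left Finset.card_image_le _
      exact_mod_cast this
    refine (sum_le_sum_add_mul_card _ tᵢ (g := fun x => Φ₁ i (σ x) (σ (x + ee d i))) hM
      (fun x _ => ?_) fun x hx => ?_).trans ?_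
    · linarith [le_abs_self (Φ₁ i (σ' x) (σ' (x + ee d i))), hΦ₁ i (σ' x) (σ' (x + ee d i)),
        neg_abs_le (Φ₁ i (σ x) (σ (x + ee d i))), hΦ₁ i (σ x) (σ (x + ee d i))]
    · have hxt : x ∉ t := fun h => hx (Finset.mem_union_left _ h)
      have hyt : x + ee d i ∉ t := fun h =>
        hx (Finset.mem_union_right _ (Finset.mem_image.mpr ⟨_, h, add_sub_cancel_right _ _⟩))
      rw [h hxt, h hyt]
    · gcongr
  calc energy Φ₀ Φ₁ Λ σ'
      ≤ (∑ x ∈ Λ, Φ₀ (σ x) + 2 * M * t.card) + ∑ i : Fin d,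
          (∑ x ∈ Λ.filter (fun x => x + ee d i ∈ Λ), Φ₁ i (σ x) (σ (x + ee d i)) +
            2 * M * (2 * t.card)) :=
        add_le_add hsite (Finset.sum_le_sum fun i _ => hbond i)
    _ = energy Φ₀ Φ₁ Λ σ + 2 * M * ((2 * d + 1) * t.card) := by
        rw [Finset.sum_add_distrib, Finset.sum_const, Finset.card_univ, Fintype.card_fin,
          nsmul_eq_mul, energy]
        ring

lemma bWeight_nonneg (E : Fin d → Set (A × A)) (Φ₀ : A → ℝ) (Φ₁ : Fin d → A → A → ℝ)
    (Λ : Finset (Site d)) (ω : Site d → A) (θ : {x // x ∈ Λ} → A) :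
    0 ≤ bWeight E Φ₀ Φ₁ Λ ω θ := by
  unfold bWeight
  split_ifs <;> positivity

theorem SafeSymbol.bWeight_le_exp_mul_bWeight_insulate {E : Fin d → Set (A × A)} {a : A}
    (hsafe : SafeSymbol E a) {Φ₀ : A → ℝ} {Φ₁ : Fin d → A → A → ℝ} {M : ℝ}
    (hΦ₀ : ∀ b, |Φ₀ b| ≤ M) (hΦ₁ : ∀ i b c, |Φ₁ i b c| ≤ M) {ω : Site d → A}
    (hω : ω ∈ Omega E) (Λ : Finset (Site d)) (θ : {x // x ∈ Λ} → A) :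
    bWeight E Φ₀ Φ₁ Λ ω θ ≤
      Real.exp (2 * M * ((2 * d + 1) * (originNbhd d).card)) *
        bWeight E Φ₀ Φ₁ Λ ω (insulate Λ ω a θ) := by
  unfold bWeight
  split_ifs with hfeas hfeas'
  · rw [← Real.exp_add, Real.exp_le_exp]
    have := energy_le_energy_add_of_eqOn_compl Φ₀ Φ₁ hΦ₀ hΦ₁ (closureF Λ) (originNbhd d)
      fun x hx => patch_insulate_of_notMem_inter (θ := θ) (ω := ω) (a := a)
        fun h => hx (Finset.mem_inter.mp h).2
    linarith
  · exact absurd (hsafe.feasibleOn_patch_insulate hω hfeas) hfeas'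
  all_goals positivity

theorem SafeSymbol.sum_bWeight_pos [Fintype A] {E : Fin d → Set (A × A)} {a : A}
    (hsafe : SafeSymbol E a) (Φ₀ : A → ℝ) (Φ₁ : Fin d → A → A → ℝ) (Λ : Finset (Site d))
    {ω : Site d → A} (hω : ω ∈ Omega E) :
    0 < ∑ θ : {x // x ∈ Λ} → A, bWeight E Φ₀ Φ₁ Λ ω θ := by
  refine Finset.sum_pos' (fun θ _ => bWeight_nonneg E Φ₀ Φ₁ Λ ω θ)
    ⟨fun _ => a, Finset.mem_univ _, ?_⟩
  have hfeas : FeasibleOn E ↑(closureF Λ) (patch Λ (fun _ => a) ω) := by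
    intro x _ i _
    by_cases hx : x ∈ Λ
    · rw [patch_of_mem hx]; exact (hsafe i _).1
    by_cases hy : x + ee d i ∈ Λ
    · rw [patch_of_mem hy]; exact (hsafe i _).2
    rw [patch_of_notMem hx, patch_of_notMem hy]
    exact hω x trivial i trivial
  rw [bWeight, if_pos hfeas]
  exact Real.exp_pos _

lemma card_filter_insulate_eq_le [Fintype A] (Λ : Finset (Site d)) (ω : Site d → A) (a : A)
    (b : {x // x ∈ Λ} → A) :
    (Finset.univ.filter fun θ => insulate Λ ω a θ = b).card ≤
      Fintype.card A ^ (originNbhd d).card := by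
  -- `insulate` only forgets the values of `θ` on `originNbhd d`
  let restrict : ({x // x ∈ Λ} → A) → {y // y ∈ originNbhd d} → A :=
    fun θ y => if h : (y : Site d) ∈ Λ then θ ⟨y, h⟩ else a
  have hinj : Set.InjOn restrict (Finset.univ.filter fun θ => insulate Λ ω a θ = b) := by
    intro θ₁ h₁ θ₂ h₂ heq
    funext x
    by_cases hxN : (x : Site d) ∈ originNbhd d
    · simpa [restrict, x.2] using congrFun heq ⟨x, hxN⟩
    · have hx0 : (x : Site d) ≠ 0 := by
        intro h; exact hxN (h ▸ Finset.mem_insert_self _ _)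
      have hθ : ∀ θ, insulate Λ ω a θ x = θ x := fun θ => by simp [insulate, hx0, hxN]
      rw [← hθ θ₁, ← hθ θ₂, (Finset.mem_filter.mp h₁).2, (Finset.mem_filter.mp h₂).2]
  calc _ ≤ (Finset.univ : Finset ({y // y ∈ originNbhd d} → A)).card :=
        Finset.card_le_card_of_injOn restrict (fun _ _ => Finset.mem_univ _) hinj
    _ = Fintype.card A ^ (originNbhd d).card := by
        rw [Finset.card_univ, Fintype.card_fun, Fintype.card_coe]

lemma exists_abs_le_interaction [Finite A] (Φ₀ : A → ℝ) (Φ₁ : Fin d → A → A → ℝ) :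
    ∃ M, (∀ b, |Φ₀ b| ≤ M) ∧ ∀ i b c, |Φ₁ i b c| ≤ M := by
  obtain ⟨M₀, hM₀⟩ := Finite.bddAbove_range fun b => |Φ₀ b|
  obtain ⟨M₁, hM₁⟩ := Finite.bddAbove_range fun p : Fin d × A × A => |Φ₁ p.1 p.2.1 p.2.2|
  exact ⟨max M₀ M₁, fun b => le_max_of_le_left (hM₀ ⟨b, rfl⟩),
    fun i b c => le_max_of_le_right (hM₁ ⟨(i, b, c), rfl⟩)⟩

theorem SafeSymbol.exists_pos_le_piAt [Fintype A] {E : Fin d → Set (A × A)} {a : A}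
    (hsafe : SafeSymbol E a) (Φ₀ : A → ℝ) (Φ₁ : Fin d → A → A → ℝ) :
    ∃ c > 0, ∀ (Λ : Finset (Site d)), ∀ ω ∈ Omega E, c ≤ piAt E Φ₀ Φ₁ Λ ω := by
  obtain ⟨M, hΦ₀, hΦ₁⟩ := exists_abs_le_interaction Φ₀ Φ₁
  set C := Real.exp (2 * M * ((2 * d + 1) * (originNbhd d).card))
  obtain ⟨K, hK, hfiber⟩ : ∃ K : ℕ, 0 < K ∧ ∀ Λ (ω : Site d → A) b,
      (Finset.univ.filter fun θ => insulate Λ ω a θ = b).card ≤ K :=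
    ⟨_, pow_pos (Fintype.card_pos_iff.mpr ⟨a⟩) _, fun Λ ω => card_filter_insulate_eq_le Λ ω a⟩
  refine ⟨(C * K)⁻¹, by positivity, fun Λ ω hω => ?_⟩
  set w := bWeight E Φ₀ Φ₁ Λ ω
  let wAt : ({x // x ∈ Λ} → A) → ℝ := fun θ => if patch Λ θ ω 0 = ω 0 then w θ else 0
  have hZ : ∑ θ, w θ ≤ C * K * ∑ θ, wAt θ := calc
    ∑ θ, w θ ≤ ∑ θ, C * w (insulate Λ ω a θ) :=
        Finset.sum_le_sum fun θ _ => hsafe.bWeight_le_exp_mul_bWeight_insulate hΦ₀ hΦ₁ hω Λ θ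
    _ = C * ∑ θ, wAt (insulate Λ ω a θ) := by
        simp only [wAt, patch_insulate_zero, if_true, Finset.mul_sum]
    _ ≤ C * (K * ∑ θ, wAt θ) := by
        gcongr
        refine sum_comp_le_mul_sum (fun θ => ?_) (hfiber Λ ω)
        by_cases h : patch Λ θ ω 0 = ω 0 <;> simp [wAt, h, w, bWeight_nonneg]
    _ = C * K * ∑ θ, wAt θ := by ring
  rw [piAt, piProb, le_div_iff₀ (hsafe.sum_bWeight_pos Φ₀ Φ₁ Λ hω),
    inv_mul_le_iff₀ (by positivity)]
  exact hZ

end SafeSymbol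

lemma le_cpi {d : ℕ} {A : Type} [Fintype A] {E : Fin d → Set (A × A)} {Φ₀ : A → ℝ}
    {Φ₁ : Fin d → A → A → ℝ} {S : Set (Site d → A)} {c : ℝ} (hS : S.Nonempty)
    (h : ∀ Λ : Finset (Site d), (0 : Site d) ∈ Λ → ∀ ω ∈ S, c ≤ piAt E Φ₀ Φ₁ Λ ω) :
    c ≤ cpi E Φ₀ Φ₁ S := by
  obtain ⟨ω, hω⟩ := hS
  refine le_csInf ⟨_, {0}, Finset.mem_singleton_self 0, ω, hω, rfl⟩ ?_
  rintro _ ⟨Λ, h0, ω, hω, rfl⟩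
  exact h Λ h0 ω hω

theorem measSupport_nonempty {d : ℕ} {A : Type} [Countable A] [MeasurableSpace A]
    (ν : Measure (Site d → A)) [NeZero ν] : (measSupport ν).Nonempty := by
  by_contra hempty
  have hnull : ∀ ω, ∃ Λ, ν (cylinder Λ ω) = 0 := by
    simpa [measSupport, Set.not_nonempty_iff_eq_empty, Set.eq_empty_iff_forall_notMem]
      using hempty
  -- so every point lies in one of the countably many null cylinders
  let restrict (Λ : Finset (Site d)) (σ : Site d → A) : {x // x ∈ Λ} → A := fun x => σ x
  have hcyl (Λ : Finset (Site d)) (ω : Site d → A) :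
      cylinder Λ ω = restrict Λ ⁻¹' {restrict Λ ω} := by
    ext σ
    simp [cylinder, restrict, funext_iff]
  let N : Set (Site d → A) := ⋃ p : {p : Σ Λ : Finset (Site d), ({x // x ∈ Λ} → A) //
    ν (restrict p.1 ⁻¹' {p.2}) = 0}, restrict p.1.1 ⁻¹' {p.1.2}
  have hcover : Set.univ ⊆ N := by
    intro ω _
    obtain ⟨Λ, hΛ⟩ := hnull ω
    exact Set.mem_iUnion.mpr ⟨⟨⟨Λ, restrict Λ ω⟩, hcyl Λ ω ▸ hΛ⟩, rfl⟩
  have hN : ν N = 0 := measure_iUnion_null fun p => p.2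
  exact NeZero.ne ν (Measure.measure_univ_eq_zero.mp (measure_mono_null hcover hN))

theorem safe_symbol_cpi_pos_general
    {d : ℕ} {A : Type} [Fintype A] [MeasurableSpace A]
    (E : Fin d → Set (A × A)) (Φ₀ : A → ℝ) (Φ₁ : Fin d → A → A → ℝ)
    (a : A) (hsafe : SafeSymbol E a)
    (ν : Measure (Site d → A)) [IsProbabilityMeasure ν]
    (hsupp : measSupport ν ⊆ Omega E) :
    0 < cpi E Φ₀ Φ₁ (measSupport ν) := by
  obtain ⟨c, hc, hle⟩ := hsafe.exists_pos_le_piAt Φ₀ Φ₁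
  exact hc.trans_le (le_cpi (measSupport_nonempty ν) fun Λ _ ω hω => hle Λ ω (hsupp hω))

/-- Lemma 6.4: a safe symbol forces `c_π(ν) > 0` for every
shift-invariant measure supported in `Ω(ℰ)`. -/
theorem safe_symbol_cpi_pos
    {d : ℕ} {A : Type} [Fintype A] [DecidableEq A] [MeasurableSpace A]
    (E : Fin d → Set (A × A)) (Φ₀ : A → ℝ) (Φ₁ : Fin d → A → A → ℝ)
    (hΩ : (Omega E).Nonempty) (a : A) (hsafe : SafeSymbol E a)
    (ν : Measure (Site d → A)) [IsProbabilityMeasure ν]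
    (hinv : ShiftInvariant ν) (hsupp : measSupport ν ⊆ Omega E) :
    0 < cpi E Φ₀ Φ₁ (measSupport ν) :=
  safe_symbol_cpi_pos_general E Φ₀ Φ₁ a hsafe ν hsupp

end Paper
end

section
/- Let Λ be a finite subset of ℤ², q ∈ ℕ and λ > 0, and let π^{ω_q}_{λ,Λ} be the Widom-Rowlinson distribution on {0,1,…,q}^Λ with q types, activity λ and boundary condition all-q on ∂Λ. Define f : {0,…,q}^Λ → {0,1}^Λ by (f(θ))(x) = 0 if θ(x) = 0 and (f(θ))(x) = 1 otherwise, and let p = λ/(1+λ). Then the push-forward measure f_* π^{ω_q}_{λ,Λ} equals the wired site random-cluster measure ψ^{(1)}_{p,q,Λ}. -/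
open scoped Classical
open Filter MeasureTheory

namespace Paper

/-! With all-`q` boundary the Widom-Rowlinson weight of a feasible configuration `θ` is
`λ ^ (|∂Λ| + #{θ ≠ 0})`, and `θ` is feasible exactly when it is constant on each cluster of its
occupied sites and equals `q` on every cluster that meets the inner boundary. The remaining
(free) clusters take any of the `q` nonzero colours independently, so the configurations with
occupation pattern `η` carry total weight `λ ^ |∂Λ| * λ ^ #η * q ^ κ(η)`. As `p / (1 - p) = λ`,
this is `λ ^ |∂Λ|` times the random-cluster weight of `η`, and the factor cancels on
normalising. -/

open Finset

theorem last_ne_zero {q : ℕ} (hq : 0 < q) : (Fin.last q : Fin (q + 1)) ≠ 0 :=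
  Fin.ne_of_val_ne (by simpa using hq.ne')

section Lattice

variable {d : ℕ}

theorem adj_comm {x y : Site d} : adj x y ↔ adj y x := by
  simp only [adj, ← Int.natAbs_neg (x _ - y _), neg_sub]

theorem adj_add_ee (x : Site d) (i : Fin d) : adj x (x + ee d i) := by
  simp [adj, ee, apply_ite]

theorem adj_iff_exists_ee {x y : Site d} :
    adj x y ↔ ∃ i, y = x + ee d i ∨ x = y + ee d i := by
  refine ⟨fun h => ?_, ?_⟩
  · obtain ⟨i, -, hi⟩ := exists_ne_zero_of_sum_ne_zero (h.symm ▸ one_ne_zero)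
    have hsplit := add_sum_erase univ (fun j => (x j - y j).natAbs) (mem_univ i)
    simp only [adj] at h hi
    have hrest0 : ∑ j ∈ univ.erase i, (x j - y j).natAbs = 0 := by omega
    have hi1 : x i - y i = 1 ∨ x i - y i = -1 := by omega
    have hrest : ∀ j ≠ i, x j = y j := fun j hj => by
      have := sum_eq_zero_iff.mp hrest0 j (mem_erase.mpr ⟨hj, mem_univ j⟩)
      omega
    refine ⟨i, ?_⟩
    rcases hi1 with hxy | hxy
    · right
      funext j
      by_cases hj : j = i
      · subst hj; simp [ee]; omega
      · simp [ee, hj, hrest j hj]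
    · left
      funext j
      by_cases hj : j = i
      · subst hj; simp [ee]; omega
      · simp [ee, hj, hrest j hj]
  · rintro ⟨i, rfl | rfl⟩
    exacts [adj_add_ee x i, adj_comm.mp (adj_add_ee y i)]

theorem subset_closureF (Λ : Finset (Site d)) : Λ ⊆ closureF Λ :=
  subset_union_left

theorem add_ee_mem_closureF {Λ : Finset (Site d)} {x : Site d} (hx : x ∈ Λ) (i : Fin d) :
    x + ee d i ∈ closureF Λ :=
  mem_union_right _ <| mem_biUnion.mpr ⟨i, mem_univ _, mem_union_left _ (mem_image_of_mem _ hx)⟩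

theorem mem_closureF_of_add_ee_mem {Λ : Finset (Site d)} {x : Site d} {i : Fin d}
    (h : x + ee d i ∈ Λ) : x ∈ closureF Λ :=
  mem_union_right _ <| mem_biUnion.mpr
    ⟨i, mem_univ _, mem_union_right _ (mem_image.mpr ⟨x + ee d i, h, by simp⟩)⟩

theorem mem_closureF_of_adj {Λ : Finset (Site d)} {x y : Site d} (hx : x ∈ Λ) (hxy : adj x y) :
    y ∈ closureF Λ := by
  obtain ⟨i, rfl | rfl⟩ := adj_iff_exists_ee.mp hxy
  exacts [add_ee_mem_closureF hx i, mem_closureF_of_add_ee_mem hx]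

theorem feasibleOn_iff_forall_adj {A : Type} {E : Set (A × A)}
    (hE : ∀ a b, (a, b) ∈ E → (b, a) ∈ E) {S : Set (Site d)} {ω : Site d → A} :
    FeasibleOn (fun _ => E) S ω ↔ ∀ x ∈ S, ∀ y ∈ S, adj x y → (ω x, ω y) ∉ E := by
  refine ⟨fun h x hx y hy hxy => ?_, fun h x hx i hxi => h x hx _ hxi (adj_add_ee x i)⟩
  obtain ⟨i, rfl | rfl⟩ := adj_iff_exists_ee.mp hxy
  exacts [h x hx i hy, fun hE' => h y hy i hx (hE _ _ hE')]

theorem closureF_eq_union_bdry (Λ : Finset (Site d)) : closureF Λ = Λ ∪ bdry Λ :=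
  (union_sdiff_of_subset (subset_closureF Λ)).symm

theorem disjoint_bdry (Λ : Finset (Site d)) : Disjoint Λ (bdry Λ) :=
  disjoint_sdiff

end Lattice

section Patch

variable {d : ℕ} {A : Type} {Λ : Finset (Site d)}

@[simp]
theorem patch_coe (θ : {x // x ∈ Λ} → A) (ω : Site d → A) (x : {x // x ∈ Λ}) :
    patch Λ θ ω x = θ x :=
  dif_pos x.2

theorem patch_of_mem_s17 (θ : {x // x ∈ Λ} → A) (ω : Site d → A) {x : Site d} (hx : x ∈ Λ) :
    patch Λ θ ω x = θ ⟨x, hx⟩ :=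
  dif_pos hx

theorem patch_of_notMem_s17 (θ : {x // x ∈ Λ} → A) (ω : Site d → A) {x : Site d} (hx : x ∉ Λ) :
    patch Λ θ ω x = ω x :=
  dif_neg hx

@[simp]
theorem patchB_coe (η : {x // x ∈ Λ} → Bool) (x : {x // x ∈ Λ}) : patchB Λ η x = η x :=
  dif_pos x.2

theorem card_filter_patchB (η : {x // x ∈ Λ} → Bool) :
    #(Λ.filter fun x => patchB Λ η x = true) = #(univ.filter fun x => η x = true) := by
  rw [univ_eq_attach, ← card_attach, ← card_map, ← filter_attach]
  simp

end Patch

section Clusters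

variable {d : ℕ} {Λ : Finset (Site d)} {σ : Site d → Bool}

theorem mem_clusterIn_self (x : Site d) : x ∈ clusterIn Λ σ x :=
  Relation.ReflTransGen.refl

theorem mem_clusterIn_of_adj {x y : Site d} (hx : x ∈ Λ) (hy : y ∈ Λ) (hσx : σ x = true)
    (hσy : σ y = true) (hxy : adj x y) : y ∈ clusterIn Λ σ x :=
  Relation.ReflTransGen.single ⟨hx, hy, hσx, hσy, hxy⟩

theorem mem_and_eq_true_of_mem_clusterIn {x z : Site d} (hx : x ∈ Λ) (hσ : σ x = true)
    (h : z ∈ clusterIn Λ σ x) : z ∈ Λ ∧ σ z = true := by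
  induction h with
  | refl => exact ⟨hx, hσ⟩
  | tail _ hR _ => exact ⟨hR.2.1, hR.2.2.2.1⟩

theorem clusterIn_eq_of_mem {x y : Site d} (h : y ∈ clusterIn Λ σ x) :
    clusterIn Λ σ y = clusterIn Λ σ x := by
  have : Std.Symm fun u v => u ∈ Λ ∧ v ∈ Λ ∧ σ u = true ∧ σ v = true ∧ adj u v :=
    ⟨fun _ _ ⟨hu, hv, hσu, hσv, huv⟩ => ⟨hv, hu, hσv, hσu, adj_comm.mp huv⟩⟩
  ext z
  exact ⟨h.trans, (Relation.ReflTransGen.stdSymm.symm _ _ h).trans⟩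

end Clusters

theorem sum_eq_sum_sum_ite_occupation {ι M N : Type*} [Fintype ι] [DecidableEq ι] [Fintype M]
    [Zero M] [DecidableEq M] [AddCommMonoid N] (w : (ι → M) → N) :
    ∑ θ, w θ = ∑ η : ι → Bool, ∑ θ, if ∀ x, η x = true ↔ θ x ≠ 0 then w θ else 0 := by
  rw [sum_comm]
  refine sum_congr rfl fun θ _ => ?_
  have hfibre : ∀ η : ι → Bool,
      (∀ x, η x = true ↔ θ x ≠ 0) ↔ (fun x => decide (θ x ≠ 0)) = η := fun η => by
    rw [funext_iff]
    refine forall_congr' fun x => ?_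
    cases η x <;> simp
  simp only [hfibre, sum_ite_eq, mem_univ, if_true]

theorem psiWeight_patchB {d : ℕ} {Λ : Finset (Site d)} {lam : ℝ} (hlam : 1 + lam ≠ 0) (q : ℝ)
    (η : {x // x ∈ Λ} → Bool) :
    psiWeight (lam / (1 + lam)) q Λ (patchB Λ η) =
      lam ^ #(univ.filter fun x => η x = true) * q ^ kappa Λ (patchB Λ η) := by
  have hodds : lam / (1 + lam) / (1 - lam / (1 + lam)) = lam := by
    field_simp
    ring
  rw [psiWeight, hodds, card_filter_patchB]

section WiredColourings

variable {d q : ℕ} {Λ : Finset (Site d)}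

def freeClusters (Λ : Finset (Site d)) (σ : Site d → Bool) : Set (Set (Site d)) :=
  {C | ∃ x ∈ Λ, σ x = true ∧ C = clusterIn Λ σ x ∧ ∀ z ∈ C, z ∉ innerBdry Λ}

theorem kappa_eq_ncard_freeClusters (σ : Site d → Bool) :
    kappa Λ σ = (freeClusters Λ σ).ncard :=
  rfl

theorem finite_freeClusters (σ : Site d → Bool) : (freeClusters Λ σ).Finite :=
  (Λ.finite_toSet.image (clusterIn Λ σ)).subset <| by
    rintro C ⟨x, hx, -, rfl, -⟩
    exact ⟨x, hx, rfl⟩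

structure IsWiredColouring (q : ℕ) (Λ : Finset (Site d)) (η : {x // x ∈ Λ} → Bool)
    (θ : {x // x ∈ Λ} → Fin (q + 1)) : Prop where
  eq_true_iff : ∀ x, η x = true ↔ θ x ≠ 0
  eq_of_adj : ∀ x y : {x // x ∈ Λ}, adj (x : Site d) y → θ x ≠ 0 → θ y ≠ 0 → θ x = θ y
  eq_last_of_mem_innerBdry :
    ∀ x : {x // x ∈ Λ}, (x : Site d) ∈ innerBdry Λ → θ x ≠ 0 → θ x = Fin.last q

variable {η : {x // x ∈ Λ} → Bool} {θ : {x // x ∈ Λ} → Fin (q + 1)}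

namespace IsWiredColouring

theorem ne_zero_of_mem (hθ : IsWiredColouring q Λ η θ) {x : Site d} (hx : x ∈ Λ)
    (hσx : patchB Λ η x = true) : θ ⟨x, hx⟩ ≠ 0 :=
  (hθ.eq_true_iff _).mp ((patchB_coe η ⟨x, hx⟩).symm.trans hσx)

theorem eq_of_mem_clusterIn (hθ : IsWiredColouring q Λ η θ) {u v : Site d}
    (h : v ∈ clusterIn Λ (patchB Λ η) u) (hu : u ∈ Λ) (hv : v ∈ Λ) :
    θ ⟨u, hu⟩ = θ ⟨v, hv⟩ := by
  induction h with
  | refl => rfl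
  | @tail b c _ hbc ih =>
    obtain ⟨hb, -, hσb, hσc, hbc⟩ := hbc
    exact (ih hb).trans
      (hθ.eq_of_adj _ _ hbc (hθ.ne_zero_of_mem hb hσb) (hθ.ne_zero_of_mem hv hσc))

theorem eq_last_of_notMem_freeClusters (hθ : IsWiredColouring q Λ η θ)
    {x : {x // x ∈ Λ}} (hx : η x = true)
    (hC : clusterIn Λ (patchB Λ η) x ∉ freeClusters Λ (patchB Λ η)) :
    θ x = Fin.last q := by
  have hσx : patchB Λ η x = true := by rwa [patchB_coe]
  obtain ⟨z, hzC, hzB⟩ : ∃ z ∈ clusterIn Λ (patchB Λ η) x, z ∈ innerBdry Λ := by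
    by_contra! hfree
    exact hC ⟨x, x.2, hσx, rfl, hfree⟩
  obtain ⟨hzΛ, hσz⟩ := mem_and_eq_true_of_mem_clusterIn x.2 hσx hzC
  rw [hθ.eq_of_mem_clusterIn hzC x.2 hzΛ]
  exact hθ.eq_last_of_mem_innerBdry ⟨z, hzΛ⟩ hzB (hθ.ne_zero_of_mem hzΛ hσz)

end IsWiredColouring

noncomputable def wiredColouringOf (η : {x // x ∈ Λ} → Bool)
    (g : freeClusters Λ (patchB Λ η) → {c : Fin (q + 1) // c ≠ 0}) :
    {x // x ∈ Λ} → Fin (q + 1) := fun x =>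
  if η x = true then
    if hC : clusterIn Λ (patchB Λ η) x ∈ freeClusters Λ (patchB Λ η) then g ⟨_, hC⟩
    else Fin.last q
  else 0

theorem eq_true_of_wiredColouringOf_ne_zero
    {g : freeClusters Λ (patchB Λ η) → {c : Fin (q + 1) // c ≠ 0}} {x : {x // x ∈ Λ}}
    (h : wiredColouringOf η g x ≠ 0) : η x = true := by
  by_contra hx
  simp [wiredColouringOf, hx] at h

theorem isWiredColouring_wiredColouringOf (hq : 0 < q)
    (g : freeClusters Λ (patchB Λ η) → {c : Fin (q + 1) // c ≠ 0}) :
    IsWiredColouring q Λ η (wiredColouringOf η g) where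
  eq_true_iff x := by
    refine ⟨fun hx => ?_, eq_true_of_wiredColouringOf_ne_zero⟩
    rw [wiredColouringOf, if_pos hx]
    split_ifs
    exacts [(g _).2, last_ne_zero hq]
  eq_of_adj x y hxy hx hy := by
    have hηx := eq_true_of_wiredColouringOf_ne_zero hx
    have hηy := eq_true_of_wiredColouringOf_ne_zero hy
    have hC : clusterIn Λ (patchB Λ η) y = clusterIn Λ (patchB Λ η) x :=
      clusterIn_eq_of_mem <| mem_clusterIn_of_adj x.2 y.2 (by simpa) (by simpa) hxy
    simp only [wiredColouringOf, hηx, hηy, hC]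
  eq_last_of_mem_innerBdry x hxB hx := by
    have hηx := eq_true_of_wiredColouringOf_ne_zero hx
    have hC : clusterIn Λ (patchB Λ η) x ∉ freeClusters Λ (patchB Λ η) :=
      fun ⟨_, _, _, _, hfree⟩ => hfree x (mem_clusterIn_self _) hxB
    simp [wiredColouringOf, hηx, hC]

theorem wiredColouringOf_injective :
    Function.Injective (wiredColouringOf (q := q) η) := by
  intro g g' h
  funext C
  obtain ⟨C, x, hx, hσx, rfl, hfree⟩ := C
  have hmem : clusterIn Λ (patchB Λ η) x ∈ freeClusters Λ (patchB Λ η) :=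
    ⟨x, hx, hσx, rfl, hfree⟩
  have := congrFun h ⟨x, hx⟩
  simp only [wiredColouringOf, if_pos ((patchB_coe η ⟨x, hx⟩).symm.trans hσx)] at this
  rw [dif_pos hmem, dif_pos hmem] at this
  exact Subtype.ext this

theorem exists_wiredColouringOf_eq (hθ : IsWiredColouring q Λ η θ) :
    ∃ g, wiredColouringOf η g = θ := by
  have hrep : ∀ C : freeClusters Λ (patchB Λ η), ∃ x : {x // x ∈ Λ},
      patchB Λ η x = true ∧ (C : Set (Site d)) = clusterIn Λ (patchB Λ η) x := by
    rintro ⟨C, x, hx, hσx, rfl, -⟩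
    exact ⟨⟨x, hx⟩, hσx, rfl⟩
  choose rep hσrep hCrep using hrep
  refine ⟨fun C => ⟨θ (rep C), hθ.ne_zero_of_mem (rep C).2 (hσrep C)⟩, funext fun x => ?_⟩
  by_cases hx : η x = true
  · by_cases hC : clusterIn Λ (patchB Λ η) x ∈ freeClusters Λ (patchB Λ η)
    · set C : freeClusters Λ (patchB Λ η) := ⟨_, hC⟩
      have hrepx : (rep C : Site d) ∈ clusterIn Λ (patchB Λ η) x := by
        rw [show clusterIn Λ (patchB Λ η) x = _ from hCrep C]
        exact mem_clusterIn_self _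
      simp only [wiredColouringOf, if_pos hx, dif_pos hC]
      exact (hθ.eq_of_mem_clusterIn hrepx x.2 (rep _).2).symm
    · simp only [wiredColouringOf, if_pos hx, dif_neg hC]
      exact (hθ.eq_last_of_notMem_freeClusters hx hC).symm
  · simp only [wiredColouringOf, if_neg hx]
    by_contra h
    exact hx ((hθ.eq_true_iff x).mpr (Ne.symm h))

theorem card_isWiredColouring (hq : 0 < q) (η : {x // x ∈ Λ} → Bool) :
    #(univ.filter (IsWiredColouring q Λ η)) = q ^ kappa Λ (patchB Λ η) := by
  have := (finite_freeClusters (Λ := Λ) (patchB Λ η)).fintype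
  calc #(univ.filter (IsWiredColouring q Λ η))
      = #(univ.image (wiredColouringOf (q := q) η)) := by
        congr 1
        ext θ
        simp only [mem_filter, mem_univ, true_and, mem_image]
        exact ⟨exists_wiredColouringOf_eq,
          fun ⟨g, hg⟩ => hg ▸ isWiredColouring_wiredColouringOf hq g⟩
    _ = q ^ kappa Λ (patchB Λ η) := by
        rw [card_image_of_injective _ wiredColouringOf_injective, card_univ, Fintype.card_fun,
          Fintype.card_subtype_compl, Fintype.card_fin, Fintype.card_subtype_eq,
          kappa_eq_ncard_freeClusters, Set.ncard_eq_toFinset_card', Set.toFinset_card]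
        simp

end WiredColourings

section WidomRowlinson

variable {q : ℕ} {Λ : Finset (Site 2)} {θ : {x // x ∈ Λ} → Fin (q + 1)}

theorem wr_feasibleOn_closureF_iff (hq : 0 < q) :
    FeasibleOn (wrE q) ↑(closureF Λ) (patch Λ θ (omegaWR q)) ↔
      (∀ x y : {x // x ∈ Λ}, adj (x : Site 2) y → θ x ≠ 0 → θ y ≠ 0 → θ x = θ y) ∧
        ∀ x : {x // x ∈ Λ}, (x : Site 2) ∈ innerBdry Λ → θ x ≠ 0 → θ x = Fin.last q := by
  unfold wrE
  rw [feasibleOn_iff_forall_adj]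
  swap
  · exact fun _ _ ⟨ha, hb, hab⟩ => ⟨hb, ha, hab.symm⟩
  simp only [Set.mem_ofPred_eq, not_and_or, not_not, Finset.mem_coe]
  constructor
  · refine fun h => ⟨fun x y hxy hx hy => ?_, fun x hxB hx => ?_⟩
    · simpa [hx, hy] using h x (subset_closureF Λ x.2) y (subset_closureF Λ y.2) hxy
    · obtain ⟨-, y, hxy, hy⟩ := mem_filter.mp hxB
      simpa [patch_of_notMem_s17 θ _ hy, omegaWR, hx, last_ne_zero hq] using
        h x (subset_closureF Λ x.2) y (mem_closureF_of_adj x.2 hxy) hxy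
  · rintro ⟨hΛ, hB⟩ x - y - hxy
    by_cases hx : x ∈ Λ <;> by_cases hy : y ∈ Λ
    · rw [patch_of_mem_s17 θ _ hx, patch_of_mem_s17 θ _ hy]
      have := hΛ ⟨x, hx⟩ ⟨y, hy⟩ hxy
      tauto
    · rw [patch_of_mem_s17 θ _ hx, patch_of_notMem_s17 θ _ hy]
      have := hB ⟨x, hx⟩ (mem_filter.mpr ⟨hx, y, hxy, hy⟩)
      dsimp only [omegaWR]
      tauto
    · rw [patch_of_notMem_s17 θ _ hx, patch_of_mem_s17 θ _ hy]
      have := hB ⟨y, hy⟩ (mem_filter.mpr ⟨hy, x, adj_comm.mp hxy, hx⟩)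
      dsimp only [omegaWR]
      tauto
    · simp [patch_of_notMem_s17 θ _ hx, patch_of_notMem_s17 θ _ hy, omegaWR]

theorem isWiredColouring_iff_feasibleOn (hq : 0 < q) {η : {x // x ∈ Λ} → Bool} :
    IsWiredColouring q Λ η θ ↔
      (∀ x, η x = true ↔ θ x ≠ 0) ∧ FeasibleOn (wrE q) ↑(closureF Λ) (patch Λ θ (omegaWR q)) := by
  rw [wr_feasibleOn_closureF_iff hq]
  exact ⟨fun ⟨h₁, h₂, h₃⟩ => ⟨h₁, h₂, h₃⟩, fun ⟨h₁, h₂, h₃⟩ => ⟨h₁, h₂, h₃⟩⟩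

theorem wr_energy_patch (hq : 0 < q) (lam : ℝ) (θ : {x // x ∈ Λ} → Fin (q + 1)) :
    energy (wrPhi0 q lam) (wrPhi1 q) (closureF Λ) (patch Λ θ (omegaWR q)) =
      -((#(bdry Λ) + #(univ.filter fun x => θ x ≠ 0) : ℕ) * Real.log lam) := by
  have hΛ : ∑ x ∈ Λ, wrPhi0 q lam (patch Λ θ (omegaWR q) x) =
      #(univ.filter fun x => θ x ≠ 0) * -Real.log lam := by
    rw [← sum_coe_sort Λ]
    simp [wrPhi0, sum_ite]
  have hbdry : ∑ x ∈ bdry Λ, wrPhi0 q lam (patch Λ θ (omegaWR q) x) =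
      #(bdry Λ) * -Real.log lam := by
    rw [sum_congr rfl fun x hx => by rw [patch_of_notMem_s17 θ _ (mem_sdiff.mp hx).2]]
    simp [wrPhi0, omegaWR, last_ne_zero hq]
  simp only [energy, wrPhi1, sum_const_zero, add_zero, closureF_eq_union_bdry]
  rw [sum_union (disjoint_bdry Λ), hΛ, hbdry]
  push_cast
  ring

theorem wr_bWeight_eq (hq : 0 < q) {lam : ℝ} (hlam : 0 < lam) (θ : {x // x ∈ Λ} → Fin (q + 1)) :
    bWeight (wrE q) (wrPhi0 q lam) (wrPhi1 q) Λ (omegaWR q) θ =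
      if FeasibleOn (wrE q) ↑(closureF Λ) (patch Λ θ (omegaWR q)) then
        lam ^ (#(bdry Λ) + #(univ.filter fun x => θ x ≠ 0)) else 0 := by
  rw [bWeight, wr_energy_patch hq, neg_neg, ← Real.log_pow, Real.exp_log (by positivity)]

theorem wr_sum_bWeight_occupation (hq : 0 < q) {lam : ℝ} (hlam : 0 < lam)
    (η : {x // x ∈ Λ} → Bool) :
    (∑ θ : {x // x ∈ Λ} → Fin (q + 1),
        if ∀ x, η x = true ↔ θ x ≠ 0
        then bWeight (wrE q) (wrPhi0 q lam) (wrPhi1 q) Λ (omegaWR q) θ else 0) =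
      lam ^ #(bdry Λ) * psiWeight (lam / (1 + lam)) q Λ (patchB Λ η) := by
  have hterm : ∀ θ : {x // x ∈ Λ} → Fin (q + 1),
      (if ∀ x, η x = true ↔ θ x ≠ 0
        then bWeight (wrE q) (wrPhi0 q lam) (wrPhi1 q) Λ (omegaWR q) θ else 0) =
      if IsWiredColouring q Λ η θ then lam ^ (#(bdry Λ) + #(univ.filter fun x => η x = true))
      else 0 := fun θ => by
    by_cases hpat : ∀ x, η x = true ↔ θ x ≠ 0
    · have hcard : univ.filter (fun x => θ x ≠ 0) = univ.filter fun x => η x = true :=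
        filter_congr fun x _ => (hpat x).symm
      rw [if_pos hpat, wr_bWeight_eq hq hlam, hcard, isWiredColouring_iff_feasibleOn hq,
        and_iff_right hpat]
    · rw [if_neg hpat, isWiredColouring_iff_feasibleOn hq, if_neg (not_and_of_not_left _ hpat)]
  rw [sum_congr rfl fun θ _ => hterm θ, sum_ite, sum_const_zero, add_zero, sum_const,
    card_isWiredColouring hq, psiWeight_patchB (by positivity), nsmul_eq_mul, pow_add]
  push_cast
  ring

end WidomRowlinson

/-- Proposition 5.4: the push-forward of the Widom-Rowlinson
distribution with monochromatic boundary under the occupation map `f` is the wired site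
random-cluster measure with `p = λ/(1+λ)`. -/
theorem wr_pushforward_site_rc (q : ℕ) (hq : 0 < q) (lam : ℝ) (hlam : 0 < lam)
    (Λ : Finset (Site 2)) :
    ∀ η : {x // x ∈ Λ} → Bool,
      (∑ θ : {x // x ∈ Λ} → Fin (q + 1),
          if ∀ x : {x // x ∈ Λ}, η x = true ↔ θ x ≠ 0
          then bWeight (wrE q) (wrPhi0 q lam) (wrPhi1 q) Λ (omegaWR q) θ else 0) /
        (∑ θ : {x // x ∈ Λ} → Fin (q + 1),
          bWeight (wrE q) (wrPhi0 q lam) (wrPhi1 q) Λ (omegaWR q) θ) =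
      psiWeight (lam / (1 + lam)) (q : ℝ) Λ (patchB Λ η) /
        ∑ η' : {x // x ∈ Λ} → Bool, psiWeight (lam / (1 + lam)) (q : ℝ) Λ (patchB Λ η') := by
  intro η
  rw [wr_sum_bWeight_occupation hq hlam, sum_eq_sum_sum_ite_occupation,
    sum_congr rfl fun η' _ => wr_sum_bWeight_occupation hq hlam η', ← mul_sum]
  exact mul_div_mul_left _ _ (pow_ne_zero _ hlam.ne')
end Paper
end
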